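/- Let n, r, s be positive integers with n > r. Then the partition (nʳ, rˢ), consisting of r parts equal to n followed by s parts equal to r, is a P-position in LCTR; that is, SG((nʳ, rˢ)) = 0. -/

import Mathlib

/-!
Induction on `r`. For `r ≥ 2`, both moves from `(nʳ, rˢ)` lead to positions from which
the other move reaches `((n-1)^(r-1), (r-1)ˢ)`, a P-position by induction, so both
options are N-positions. For `r = 1` the options are `(n-1)` and `(1ˢ)`, each of which
empties the board in one move.
-/

/-- Remove the left column of a Young diagram: subtract 1 from each part and
omit nonpositive values. -/
def leftCol (l : List ℕ) : List ℕ := (l.map (· - 1)).filter (0 < ·)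

/-- Remove the top row of a Young diagram. -/
def topRow (l : List ℕ) : List ℕ := l.tail

/-- Minimum excluded value of a set of naturals. -/
noncomputable def mex (s : Set ℕ) : ℕ := sInf {n | n ∉ s}

def wt (l : List ℕ) : ℕ := l.sum + l.length

lemma wt_leftCol_le (l : List ℕ) : wt (leftCol l) ≤ l.sum := by
  induction l with
  | nil => simp [leftCol, wt]
  | cons a t ih =>
    simp only [leftCol, wt] at ih ⊢
    rw [List.map_cons, List.filter_cons]
    by_cases h : 0 < a - 1
    · simp only [h, decide_true, if_true, List.sum_cons, List.length_cons]
      omega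
    · simp only [h, decide_false, Bool.false_eq_true, if_false, List.sum_cons]
      omega

lemma wt_leftCol_lt (l : List ℕ) (h : l ≠ []) : wt (leftCol l) < wt l := by
  have h1 := wt_leftCol_le l
  have h2 : 0 < l.length := List.length_pos_iff.mpr h
  unfold wt at *
  omega

lemma wt_topRow_lt (l : List ℕ) (h : l ≠ []) : wt (topRow l) < wt l := by
  cases l with
  | nil => exact absurd rfl h
  | cons a t => simp [topRow, wt]; omega

/-- The Sprague–Grundy value of a position in the LCTR game. -/
noncomputable def SG (l : List ℕ) : ℕ :=
  if h : l = [] then 0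
  else mex {SG (leftCol l), SG (topRow l)}
termination_by wt l
decreasing_by
  · exact wt_leftCol_lt l h
  · exact wt_topRow_lt l h

/-- A partition: a non-increasing list of positive integers. -/
def IsPartition (l : List ℕ) : Prop := l.Pairwise (· ≥ ·) ∧ ∀ x ∈ l, 0 < x

/-- The conjugate partition: the `j`-th part (for `1 ≤ j ≤ l₁`) is the number
of parts of `l` that are at least `j`. -/
def conj (l : List ℕ) : List ℕ :=
  (List.range (l.headD 0)).map (fun j => l.countP (fun x => decide (j < x)))

lemma mex_eq_zero_iff {s : Set ℕ} (hs : s.Finite) : mex s = 0 ↔ 0 ∉ s := by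
  have hne : {n | n ∉ s}.Nonempty := hs.exists_notMem
  rw [mex, Nat.sInf_eq_zero, or_iff_left hne.ne_empty, Set.mem_ofPred_eq]

lemma SG_nil : SG [] = 0 := by
  rw [SG]; rfl

lemma SG_of_ne_nil {l : List ℕ} (hl : l ≠ []) :
    SG l = mex {SG (leftCol l), SG (topRow l)} := by
  rw [SG, dif_neg hl]

lemma SG_eq_zero_iff {l : List ℕ} (hl : l ≠ []) :
    SG l = 0 ↔ SG (leftCol l) ≠ 0 ∧ SG (topRow l) ≠ 0 := by
  rw [SG_of_ne_nil hl, mex_eq_zero_iff (Set.toFinite _)]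
  simp only [Set.mem_insert_iff, Set.mem_singleton_iff, not_or, ne_comm]

lemma SG_ne_zero_of_leftCol {l : List ℕ} (hl : l ≠ []) (h : SG (leftCol l) = 0) :
    SG l ≠ 0 :=
  fun h0 => ((SG_eq_zero_iff hl).mp h0).1 h

lemma SG_ne_zero_of_topRow {l : List ℕ} (hl : l ≠ []) (h : SG (topRow l) = 0) :
    SG l ≠ 0 :=
  fun h0 => ((SG_eq_zero_iff hl).mp h0).2 h

lemma SG_singleton_ne_zero (k : ℕ) : SG [k] ≠ 0 :=
  SG_ne_zero_of_topRow (List.cons_ne_nil _ _) SG_nil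

lemma leftCol_append (l₁ l₂ : List ℕ) : leftCol (l₁ ++ l₂) = leftCol l₁ ++ leftCol l₂ := by
  simp only [leftCol, List.map_append, List.filter_append]

lemma leftCol_replicate_one (a : ℕ) : leftCol (List.replicate a 1) = [] := by
  simp [leftCol, List.map_replicate]

lemma leftCol_replicate {m : ℕ} (a : ℕ) (hm : 1 < m) :
    leftCol (List.replicate a m) = List.replicate a (m - 1) := by
  rw [leftCol, List.map_replicate, List.filter_eq_self.mpr]
  intro x hx
  rw [List.eq_of_mem_replicate hx]
  simpa using hm

lemma leftCol_replicate_append_replicate (a b : ℕ) {x y : ℕ} (hx : 1 < x) (hy : 1 < y) :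
    leftCol (List.replicate a x ++ List.replicate b y) =
      List.replicate a (x - 1) ++ List.replicate b (y - 1) := by
  rw [leftCol_append, leftCol_replicate a hx, leftCol_replicate b hy]

lemma topRow_replicate_succ_append (a x : ℕ) (l : List ℕ) :
    topRow (List.replicate (a + 1) x ++ l) = List.replicate a x ++ l :=
  rfl

lemma SG_replicate_one_ne_zero {s : ℕ} (hs : 0 < s) : SG (List.replicate s 1) ≠ 0 :=
  SG_ne_zero_of_leftCol (by simpa using hs.ne') (by rw [leftCol_replicate_one, SG_nil])

lemma SG_cons_replicate_one {n s : ℕ} (hn : 1 < n) (hs : 0 < s) :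
    SG (n :: List.replicate s 1) = 0 := by
  refine (SG_eq_zero_iff (List.cons_ne_nil _ _)).mpr ⟨?_, SG_replicate_one_ne_zero hs⟩
  rw [← List.singleton_append, leftCol_append, leftCol_replicate_one, List.append_nil,
    ← List.replicate_one, leftCol_replicate 1 hn, List.replicate_one]
  exact SG_singleton_ne_zero _

/-- For positive integers `n, r, s` with `n > r`, the partition `(nʳ, rˢ)` is
a P-position in LCTR. -/
theorem SG_diag (n r s : ℕ) (hr : 0 < r) (hs : 0 < s) (hrn : r < n) :
    SG (List.replicate r n ++ List.replicate s r) = 0 := by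
  induction r, hr using Nat.le_induction generalizing n with
  | base => exact SG_cons_replicate_one hrn hs
  | succ m hm ih =>
    have hP : SG (List.replicate m (n - 1) ++ List.replicate s m) = 0 := ih (n - 1) (by omega)
    have hne : ∀ a b : ℕ, List.replicate (m + 1) a ++ List.replicate s b ≠ [] := by simp
    refine (SG_eq_zero_iff (hne _ _)).mpr ⟨?_, ?_⟩
    · rw [leftCol_replicate_append_replicate _ _ (by omega) (by omega)]
      exact SG_ne_zero_of_topRow (hne _ _) hP
    · rw [topRow_replicate_succ_append]
      refine SG_ne_zero_of_leftCol (by simp [hs.ne']) ?_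
      rwa [leftCol_replicate_append_replicate _ _ (by omega) (by omega)]
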